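/- arXiv:1807.11885 — 13 statements merged into one kernel-verified Lean document; each statement's English description precedes it below -/
import Mathlib

section
/- Every element of the Apéry set Ap(M,Q) = M \ (Q + M), where Q = {(c/gcd(a,c))e₁, (c/gcd(b,c))e₂}, lies in the box [0, c/gcd(a,c)) × [0, c/gcd(b,c)); conversely every element of M in that box belongs to Ap(M,Q). -/
/-!
Both `q₁` and `q₂` lie in `M`, and `M` is defined by a linear congruence, so for `q, m ∈ M`
the difference `m - q` lies in `M` as soon as `q ≤ m` componentwise. Hence `m ∈ M` is in
`q + M` exactly when `q ≤ m`, and the Apéry set consists of the `m ∈ M` dominating neither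
`q₁` nor `q₂`, which is the box.
-/

theorem Nat.dvd_mul_div_gcd (a c : ℕ) : c ∣ a * (c / a.gcd c) := by
  rw [← Nat.mul_div_assoc a (Nat.gcd_dvd_right a c)]
  exact Nat.dvd_lcm_right a c

def congruenceMonoid (a b c : ℕ) : Set (ℕ × ℕ) := {p | c ∣ a * p.1 + b * p.2}

namespace congruenceMonoid

variable {a b c : ℕ}

theorem mk_div_gcd_zero_mem : (c / a.gcd c, 0) ∈ congruenceMonoid a b c := by
  simpa [congruenceMonoid] using Nat.dvd_mul_div_gcd a c

theorem mk_zero_div_gcd_mem : (0, c / b.gcd c) ∈ congruenceMonoid a b c := by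
  simpa [congruenceMonoid] using Nat.dvd_mul_div_gcd b c

theorem exists_mem_eq_add_iff_le {q m : ℕ × ℕ} (hq : q ∈ congruenceMonoid a b c)
    (hm : m ∈ congruenceMonoid a b c) :
    (∃ x ∈ congruenceMonoid a b c, m = q + x) ↔ q ≤ m := by
  refine ⟨fun ⟨x, _, hmx⟩ ↦ hmx ▸ le_self_add, fun hqm ↦ ?_⟩
  obtain ⟨x, rfl⟩ := exists_add_of_le hqm
  refine ⟨x, ?_, rfl⟩
  have hsplit : a * (q + x).1 + b * (q + x).2 = (a * q.1 + b * q.2) + (a * x.1 + b * x.2) := by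
    simp only [Prod.fst_add, Prod.snd_add]
    ring
  exact (Nat.dvd_add_right hq).mp (hsplit ▸ hm)

end congruenceMonoid

open congruenceMonoid in
theorem stmt_1_general (a b c : ℕ)
    (M : Set (ℕ × ℕ)) (hM : M = {p | c ∣ a * p.1 + b * p.2})
    (q₁ q₂ : ℕ × ℕ) (hq₁ : q₁ = (c / Nat.gcd a c, 0)) (hq₂ : q₂ = (0, c / Nat.gcd b c)) :
    {m | m ∈ M ∧ ¬ ∃ q ∈ ({q₁, q₂} : Set (ℕ × ℕ)), ∃ x ∈ M, m = q + x}
      = {m | m ∈ M ∧ m.1 < c / Nat.gcd a c ∧ m.2 < c / Nat.gcd b c} := by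
  change M = congruenceMonoid a b c at hM
  subst hM hq₁ hq₂
  ext m
  simp only [Set.mem_ofPred_eq, Set.mem_insert_iff, Set.mem_singleton_iff, exists_eq_or_imp,
    exists_eq_left, and_congr_right_iff]
  intro hm
  rw [exists_mem_eq_add_iff_le mk_div_gcd_zero_mem hm,
    exists_mem_eq_add_iff_le mk_zero_div_gcd_mem hm, Prod.mk_le_mk, Prod.mk_le_mk]
  omega

/-- For `M = {(x,y) ∈ ℕ² : c ∣ ax + by}` and
`Q = {(c/gcd(a,c), 0), (0, c/gcd(b,c))}`, the Apéry set `M \ (Q + M)` equals the set of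
elements of `M` lying in the box `[0, c/gcd(a,c)) × [0, c/gcd(b,c))`. -/
theorem stmt_1 (a b c : ℕ) (ha : 0 < a) (hb : 0 < b) (hc : 0 < c)
    (M : Set (ℕ × ℕ)) (hM : M = {p | c ∣ a * p.1 + b * p.2})
    (q₁ q₂ : ℕ × ℕ) (hq₁ : q₁ = (c / Nat.gcd a c, 0)) (hq₂ : q₂ = (0, c / Nat.gcd b c)) :
    {m | m ∈ M ∧ ¬ ∃ q ∈ ({q₁, q₂} : Set (ℕ × ℕ)), ∃ x ∈ M, m = q + x}
      = {m | m ∈ M ∧ m.1 < c / Nat.gcd a c ∧ m.2 < c / Nat.gcd b c} :=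
  stmt_1_general a b c M hM q₁ q₂ hq₁ hq₂
end

section
/- If (i,j) and (k,l) are two distinct elements of M lying in the box [0, c/gcd(a,c)) × [0, c/gcd(b,c)), then i ≠ k and j ≠ l. -/
/-! Two points of `M` with the same first coordinate `i` satisfy `b j ≡ b l [MOD c]`. Cancelling
`b` leaves `j ≡ l` modulo `c / gcd(b, c)`, and two residues below that modulus coincide. -/

namespace Nat

theorem eq_of_mul_modEq_mul_of_lt_div_gcd {m c x y : ℕ} (h : c * x ≡ c * y [MOD m])
    (hx : x < m / gcd m c) (hy : y < m / gcd m c) : x = y := by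
  have hm : 0 < m := Nat.pos_of_ne_zero fun hm => by simp [hm] at hx
  exact (h.cancel_left_div_gcd hm).eq_of_lt_of_lt hx hy

theorem eq_of_dvd_add_mul_of_lt_div_gcd {m r c x y : ℕ} (hx : m ∣ r + c * x)
    (hy : m ∣ r + c * y) (hxm : x < m / gcd c m) (hym : y < m / gcd c m) : x = y := by
  have hmod : r + c * x ≡ r + c * y [MOD m] :=
    (modEq_zero_iff_dvd.mpr hx).trans (modEq_zero_iff_dvd.mpr hy).symm
  rw [gcd_comm] at hxm hym
  exact eq_of_mul_modEq_mul_of_lt_div_gcd (hmod.add_left_cancel' r) hxm hym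

end Nat

theorem stmt_2_general (a b c : ℕ)
    (i j k l : ℕ)
    (hij : c ∣ a * i + b * j) (hkl : c ∣ a * k + b * l)
    (hi : i < c / Nat.gcd a c) (hj : j < c / Nat.gcd b c)
    (hk : k < c / Nat.gcd a c) (hl : l < c / Nat.gcd b c)
    (hne : (i, j) ≠ (k, l)) :
    i ≠ k ∧ j ≠ l := by
  constructor
  · rintro rfl
    exact hne (by rw [Nat.eq_of_dvd_add_mul_of_lt_div_gcd hij hkl hj hl])
  · rintro rfl
    rw [add_comm] at hij hkl
    exact hne (by rw [Nat.eq_of_dvd_add_mul_of_lt_div_gcd hij hkl hi hk])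

/-- If `(i,j)` and `(k,l)` are distinct elements of
`M = {(x,y) ∈ ℕ² : c ∣ ax + by}` (with `gcd(a,b,c) = 1`) lying in the box
`[0, c/gcd(a,c)) × [0, c/gcd(b,c))`, then `i ≠ k` and `j ≠ l`. -/
theorem stmt_2 (a b c : ℕ) (ha : 0 < a) (hb : 0 < b) (hc : 0 < c)
    (hgcd : Nat.gcd a (Nat.gcd b c) = 1)
    (i j k l : ℕ)
    (hij : c ∣ a * i + b * j) (hkl : c ∣ a * k + b * l)
    (hi : i < c / Nat.gcd a c) (hj : j < c / Nat.gcd b c)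
    (hk : k < c / Nat.gcd a c) (hl : l < c / Nat.gcd b c)
    (hne : (i, j) ≠ (k, l)) :
    i ≠ k ∧ j ≠ l :=
  stmt_2_general a b c i j k l hij hkl hi hj hk hl hne
end

section
/- For i ∈ {0, …, c/gcd(a,c) − 1}, there exists j ∈ {0, …, c/gcd(b,c) − 1} with (i,j) ∈ M if and only if gcd(b,c) divides i; moreover when it exists, such j is unique. -/
/-- For `i ∈ {0, …, c/gcd(a,c) − 1}` there exists `j ∈ {0, …, c/gcd(b,c) − 1}`
with `(i,j) ∈ M = {(x,y) : c ∣ ax + by}` iff `gcd(b,c) ∣ i`; moreover such a `j` is unique. -/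
theorem stmt_3 (a b c : ℕ) (hc : 0 < c) (ha : 1 ≤ a) (ha' : a < c) (hb : 1 ≤ b) (hb' : b < c)
    (hgcd : Nat.gcd a (Nat.gcd b c) = 1)
    (i : ℕ) (hi : i < c / Nat.gcd a c) :
    ((∃ j, j < c / Nat.gcd b c ∧ c ∣ a * i + b * j) ↔ Nat.gcd b c ∣ i) ∧
    (∀ j j', j < c / Nat.gcd b c → j' < c / Nat.gcd b c →
      c ∣ a * i + b * j → c ∣ a * i + b * j' → j = j') := by
  set d := Nat.gcd b c with hd
  have hdpos : 0 < d := Nat.gcd_pos_of_pos_right _ hc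
  have hdb : d ∣ b := Nat.gcd_dvd_left b c
  have hdc : d ∣ c := Nat.gcd_dvd_right b c
  set c' := c / d with hc'def
  set b' := b / d with hb'def
  have hcc : c = d * c' := (Nat.mul_div_cancel' hdc).symm
  have hbb : b = d * b' := (Nat.mul_div_cancel' hdb).symm
  have hcop : Nat.Coprime b' c' := Nat.coprime_div_gcd_div_gcd hdpos
  have hc'pos : 0 < c' := Nat.div_pos (Nat.le_of_dvd hc hdc) hdpos
  haveI : NeZero c' := ⟨hc'pos.ne'⟩
  constructor
  · constructor
    · rintro ⟨j, hj, hdvd⟩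
      have h1 : d ∣ a * i + b * j := dvd_trans hdc hdvd
      have h2 : d ∣ b * j := hdb.mul_right j
      have h3 : d ∣ a * i := by
        have h := Nat.dvd_sub h1 h2
        simpa using h
      exact Nat.Coprime.dvd_of_dvd_mul_left (Nat.Coprime.symm hgcd) h3
    · rintro ⟨k, hk⟩
      set j0 : ZMod c' := -(a * k : ℕ) * (b' : ZMod c')⁻¹ with hj0
      refine ⟨j0.val, ZMod.val_lt j0, ?_⟩
      have key : c' ∣ a * k + b' * j0.val := by
        have hz : ((a * k + b' * j0.val : ℕ) : ZMod c') = 0 := by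
          push_cast
          rw [ZMod.natCast_val, ZMod.cast_id, hj0]
          have h1 : (b' : ZMod c') * (b' : ZMod c')⁻¹ = 1 :=
            ZMod.coe_mul_inv_eq_one b' hcop
          have h2 : (b' : ZMod c') * (-((a * k : ℕ) : ZMod c') * (b' : ZMod c')⁻¹)
              = -((a * k : ℕ) : ZMod c') := by
            rw [mul_comm, mul_assoc, mul_comm ((b' : ZMod c')⁻¹) (b' : ZMod c'), h1, mul_one]
          rw [h2]
          push_cast
          ring
        exact (ZMod.natCast_eq_zero_iff _ _).mp hz
      rw [hk, hcc, hbb]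
      obtain ⟨m, hm⟩ := key
      exact ⟨m, by rw [mul_assoc d c' m, ← hm]; ring⟩
  · intro j j' hj hj' hdvd hdvd'
    have main : ∀ x y : ℕ, x ≤ y → y < c' → c ∣ a * i + b * x → c ∣ a * i + b * y → x = y := by
      intro x y hxy hy hx' hy'
      obtain ⟨z, rfl⟩ := Nat.exists_eq_add_of_le hxy
      have heq : a * i + b * (x + z) = (a * i + b * x) + b * z := by ring
      have hsub : c ∣ b * z := by
        have h := Nat.dvd_sub hy' hx'
        rw [heq, Nat.add_sub_cancel_left] at h
        exact h
      have hsub' : c' ∣ b' * z := by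
        rcases hsub with ⟨m, hm⟩
        refine ⟨m, Nat.eq_of_mul_eq_mul_left hdpos ?_⟩
        rw [← mul_assoc, ← hbb, hm, hcc, mul_assoc]
      have hdvdz : c' ∣ z :=
        Nat.Coprime.dvd_of_dvd_mul_left (Nat.Coprime.symm hcop) hsub'
      have hz0 : z = 0 := Nat.eq_zero_of_dvd_of_lt hdvdz (by omega)
      omega
    rcases le_total j j' with h | h
    · exact main j j' h hj' hdvd hdvd'
    · exact (main j' j h hj hdvd' hdvd).symm
end

section
/- The Apéry set of M with respect to Q = {(c/gcd(a,c), 0), (0, c/gcd(b,c))} equals { (gcd(b,c)·i, (−i·d·a) mod (c/gcd(b,c))) : i ∈ {0, …, c/(gcd(a,c)gcd(b,c)) − 1} }, where d is the inverse of b/gcd(b,c) modulo c/gcd(b,c). -/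
/-- Auxiliary: cast of `(z % n).toNat` to `ZMod n` is the cast of `z`. -/
lemma stmt4_aux_cast (n : ℕ) (hn : 0 < n) (z : ℤ) :
    (((z % (n : ℤ)).toNat : ℕ) : ZMod n) = (z : ZMod n) := by
  have h0 : (0 : ℤ) ≤ z % (n : ℤ) :=
    Int.emod_nonneg z (by exact_mod_cast hn.ne')
  rw [← Int.cast_natCast, Int.toNat_of_nonneg h0, ZMod.intCast_mod]

/-- The Apéry set of `M = {(x,y) ∈ ℕ² : c ∣ ax + by}` with respect to
`Q = {(c/gcd(a,c), 0), (0, c/gcd(b,c))}` equals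
`{(gcd(b,c)·i, (−i·d·a) mod (c/gcd(b,c))) : 0 ≤ i < c/(gcd(a,c)gcd(b,c))}`,
where `d` is the inverse of `b/gcd(b,c)` modulo `c/gcd(b,c)`. -/
theorem stmt_4 (a b c : ℕ) (hc : 0 < c) (ha : 1 ≤ a) (ha' : a < c) (hb : 1 ≤ b) (hb' : b < c)
    (hgcd : Nat.gcd a (Nat.gcd b c) = 1)
    (M : Set (ℕ × ℕ)) (hM : M = {p | c ∣ a * p.1 + b * p.2})
    (q₁ q₂ : ℕ × ℕ) (hq₁ : q₁ = (c / Nat.gcd a c, 0)) (hq₂ : q₂ = (0, c / Nat.gcd b c))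
    (d : ℕ) (hd : (b / Nat.gcd b c) * d ≡ 1 [MOD c / Nat.gcd b c]) :
    {m | m ∈ M ∧ ∀ q ∈ ({q₁, q₂} : Set (ℕ × ℕ)), ¬ ∃ x ∈ M, m = q + x}
      = (fun i : ℕ => (Nat.gcd b c * i,
          ((-(i * d * a : ℤ)) % ((c / Nat.gcd b c : ℕ) : ℤ)).toNat)) ''
        {i | i < c / (Nat.gcd a c * Nat.gcd b c)} := by
  set ga := Nat.gcd a c with hga_def
  set gb := Nat.gcd b c with hgb_def
  have hga : ga ∣ c := Nat.gcd_dvd_right a c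
  have hgb : gb ∣ c := Nat.gcd_dvd_right b c
  have hgb_b : gb ∣ b := Nat.gcd_dvd_left b c
  have hga_a : ga ∣ a := Nat.gcd_dvd_left a c
  have hga_pos : 0 < ga := Nat.gcd_pos_of_pos_right a hc
  have hgb_pos : 0 < gb := Nat.gcd_pos_of_pos_right b hc
  have hcop : Nat.Coprime a gb := hgcd
  have hcopg : Nat.Coprime ga gb := Nat.Coprime.coprime_dvd_left hga_a hcop
  have hgagb : ga * gb ∣ c := hcopg.mul_dvd_of_dvd_of_dvd hga hgb
  set n := c / gb with hn_def
  have hcn : gb * n = c := Nat.mul_div_cancel' hgb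
  have hn_pos : 0 < n := Nat.div_pos (Nat.le_of_dvd hc hgb) hgb_pos
  set b' := b / gb with hb'_def
  have hbb' : gb * b' = b := Nat.mul_div_cancel' hgb_b
  -- gb * (c / (ga * gb)) = c / ga
  have hq : gb * (c / (ga * gb)) = c / ga := by
    have h1 : c / (ga * gb) = c / ga / gb := by
      rw [Nat.div_div_eq_div_mul]
    have h2 : gb ∣ c / ga := by
      rcases hgagb with ⟨k, hk⟩
      exact ⟨k, by rw [hk, mul_assoc, Nat.mul_div_cancel_left _ hga_pos]⟩
    rw [h1, Nat.mul_div_cancel' h2]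
  -- inverse mod n in ZMod n
  have hd' : (b' : ZMod n) * d = 1 := by
    have := (ZMod.natCast_eq_natCast_iff _ _ _).mpr hd
    push_cast at this
    exact this
  -- key divisibility translation
  have hkey : ∀ i y : ℕ, (c ∣ a * (gb * i) + b * y ↔ n ∣ a * i + b' * y) := by
    intro i y
    constructor
    · rintro ⟨k, hk⟩
      refine ⟨k, ?_⟩
      have hg : gb * (a * i + b' * y) = gb * (n * k) := by
        calc gb * (a * i + b' * y) = a * (gb * i) + (gb * b') * y := by ring
          _ = a * (gb * i) + b * y := by rw [hbb']
          _ = c * k := hk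
          _ = (gb * n) * k := by rw [hcn]
          _ = gb * (n * k) := by ring
      exact Nat.eq_of_mul_eq_mul_left hgb_pos hg
    · rintro ⟨k, hk⟩
      refine ⟨k, ?_⟩
      calc a * (gb * i) + b * y = gb * (a * i + b' * y) := by rw [← hbb']; ring
        _ = gb * (n * k) := by rw [hk]
        _ = c * k := by rw [← hcn]; ring
  -- value of t_i in ZMod n
  have ht : ∀ i : ℕ, ((((-(i * d * a : ℤ)) % ((n : ℕ) : ℤ)).toNat : ℕ) : ZMod n)
      = -((i : ZMod n) * d * a) := by
    intro i
    rw [stmt4_aux_cast n hn_pos]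
    push_cast
    ring
  have htlt : ∀ i : ℕ, ((-(i * d * a : ℤ)) % ((n : ℕ) : ℤ)).toNat < n := by
    intro i
    have h1 : (-(i * d * a : ℤ)) % ((n : ℕ) : ℤ) < n :=
      Int.emod_lt_of_pos _ (by exact_mod_cast hn_pos)
    omega
  -- characterize the Apéry set
  have hap : {m | m ∈ M ∧ ∀ q ∈ ({q₁, q₂} : Set (ℕ × ℕ)), ¬ ∃ x ∈ M, m = q + x}
      = {p : ℕ × ℕ | c ∣ a * p.1 + b * p.2 ∧ p.1 < c / ga ∧ p.2 < n} := by
    ext p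
    subst hM hq₁ hq₂
    simp only [Set.mem_setOf_eq, Set.mem_insert_iff, Set.mem_singleton_iff, forall_eq_or_imp,
      forall_eq]
    constructor
    · rintro ⟨hp, h1, h2⟩
      refine ⟨hp, ?_, ?_⟩
      · by_contra hle
        push_neg at hle
        apply h1
        refine ⟨(p.1 - c / ga, p.2), ?_, ?_⟩
        · have hdvd : c ∣ a * (c / ga) := by
            rcases hga_a with ⟨s, hs⟩
            exact ⟨s, by rw [hs, mul_comm ga s, mul_assoc, Nat.mul_div_cancel' hga, mul_comm]⟩
          have heq : a * p.1 + b * p.2 = a * (p.1 - c / ga) + b * p.2 + a * (c / ga) := by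
            have : a * p.1 = a * (p.1 - c / ga) + a * (c / ga) := by
              rw [← Nat.mul_add, Nat.sub_add_cancel hle]
            omega
          have := Nat.dvd_sub hp hdvd
          rw [heq] at this
          simpa using this
        · refine Prod.ext ?_ ?_ <;> simp <;> omega
      · by_contra hle
        push_neg at hle
        apply h2
        refine ⟨(p.1, p.2 - n), ?_, ?_⟩
        · have hdvd : c ∣ b * n := by
            rcases hgb_b with ⟨s, hs⟩
            exact ⟨s, by rw [hs, mul_comm gb s, mul_assoc, hcn, mul_comm]⟩
          have heq : a * p.1 + b * p.2 = a * p.1 + b * (p.2 - n) + b * n := by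
            have : b * p.2 = b * (p.2 - n) + b * n := by
              rw [← Nat.mul_add, Nat.sub_add_cancel hle]
            omega
          have := Nat.dvd_sub hp hdvd
          rw [heq] at this
          simpa using this
        · refine Prod.ext ?_ ?_ <;> simp <;> omega
    · rintro ⟨hp, h1, h2⟩
      refine ⟨hp, ?_, ?_⟩
      · rintro ⟨x, hx, hxe⟩
        rw [Prod.ext_iff] at hxe
        simp at hxe
        omega
      · rintro ⟨x, hx, hxe⟩
        rw [Prod.ext_iff] at hxe
        simp at hxe
        omega
  rw [hap]
  ext p
  simp only [Set.mem_setOf_eq, Set.mem_image]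
  constructor
  · rintro ⟨hp, h1, h2⟩
    -- gb ∣ p.1
    have hgbx : gb ∣ p.1 := by
      have h3 : gb ∣ a * p.1 + b * p.2 := dvd_trans hgb hp
      have h4 : gb ∣ b * p.2 := Dvd.dvd.mul_right hgb_b _
      have h5 : gb ∣ a * p.1 := (Nat.dvd_add_right h4).mp (by rwa [Nat.add_comm] at h3)
      exact (Nat.Coprime.symm hcop).dvd_of_dvd_mul_left h5
    obtain ⟨i, hi⟩ := hgbx
    refine ⟨i, ?_, ?_⟩
    · have : gb * i < gb * (c / (ga * gb)) := by rw [hq, ← hi]; exact h1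
      exact Nat.lt_of_mul_lt_mul_left this
    · -- show the pair equals p
      have hdn : n ∣ a * i + b' * p.2 := (hkey i p.2).mp (by rwa [← hi])
      have h0 : (a : ZMod n) * i + b' * p.2 = 0 := by
        have := (ZMod.natCast_eq_zero_iff _ _).mpr hdn
        push_cast at this
        exact this
      have hz : ((p.2 : ℕ) : ZMod n) = -((i : ZMod n) * d * a) := by
        linear_combination (d : ZMod n) * h0 - ((p.2 : ℕ) : ZMod n) * hd'
      have hmod : p.2 ≡ ((-(i * d * a : ℤ)) % ((n : ℕ) : ℤ)).toNat [MOD n] := by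
        rw [← ZMod.natCast_eq_natCast_iff]
        rw [ht i]
        exact hz
      have hpeq : p.2 = ((-(i * d * a : ℤ)) % ((n : ℕ) : ℤ)).toNat := by
        have h5 := htlt i
        unfold Nat.ModEq at hmod
        rwa [Nat.mod_eq_of_lt h2, Nat.mod_eq_of_lt h5] at hmod
      exact Prod.ext (by simpa using hi.symm) (by simpa using hpeq.symm)
  · rintro ⟨i, hi, hpe⟩
    rw [← hpe]
    simp only
    refine ⟨?_, ?_, htlt i⟩
    · rw [hkey]
      have h0 : ((a * i + b' * ((-(i * d * a : ℤ)) % ((n : ℕ) : ℤ)).toNat : ℕ) : ZMod n)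
          = 0 := by
        push_cast
        rw [ht i]
        linear_combination (-((a : ZMod n) * i)) * hd'
      exact (ZMod.natCast_eq_zero_iff _ _).mp h0
    · calc gb * i < gb * (c / (ga * gb)) := (mul_lt_mul_iff_right₀ hgb_pos).mpr hi
        _ = c / ga := hq
end

section
/- The cardinality of the Apéry set of M with respect to Q = {(c/gcd(a,c), 0), (0, c/gcd(b,c))} equals c/(gcd(a,c)·gcd(b,c)). -/
/-!
For `d = gcd(b, c)`, the congruence `c ∣ n + b y` is solvable iff `d ∣ n`, and then it has exactly
one solution `y < c / d`. Both generators of `Q` lie in `M`, and `M` is closed under differences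
that stay in `ℕ²`, so the Apéry set is the part of `M` in the box `[0, c / gcd(a,c)) × [0, c / d)`.
Since `a` is coprime to `d`, a point `(x, y)` of `M` has `d ∣ x`, and each such `x` in the box
carries exactly one `y`; hence the box contains `c / gcd(a,c) / d` points of `M`.
-/

namespace Nat

variable {b c n y y' : ℕ}

theorem dvd_mul_div_gcd_s5 (b c : ℕ) : c ∣ b * (c / gcd b c) := by
  simpa only [Nat.mul_div_cancel' (gcd_dvd_right b c)] using
    Nat.mul_dvd_mul_right (gcd_dvd_left b c) (c / gcd b c)

theorem gcd_dvd_of_dvd_add_mul (h : c ∣ n + b * y) : gcd b c ∣ n :=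
  (Nat.dvd_add_left (dvd_mul_of_dvd_left (gcd_dvd_left b c) y)).mp ((gcd_dvd_right b c).trans h)

theorem exists_dvd_add_mul [NeZero c] (hn : gcd b c ∣ n) : ∃ y, c ∣ n + b * y := by
  obtain ⟨k, rfl⟩ := hn
  -- Bezout `gcd b c = b s + c t` makes `y ≡ -k s` a solution modulo `c`.
  refine ⟨((-(k * gcdA b c) : ℤ) : ZMod c).val, ?_⟩
  rw [← ZMod.natCast_eq_zero_iff]
  have hbezout : ((gcd b c : ℕ) : ZMod c) = b * gcdA b c := by
    have := congrArg (fun z : ℤ => (z : ZMod c)) (gcd_eq_gcd_ab b c)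
    push_cast at this
    simpa using this
  push_cast [ZMod.natCast_val, ZMod.cast_id', id_eq, hbezout]
  ring

theorem exists_lt_div_gcd_dvd_add_mul (hc : 0 < c) (hn : gcd b c ∣ n) :
    ∃ y < c / gcd b c, c ∣ n + b * y := by
  have := NeZero.of_pos hc
  obtain ⟨y, hy⟩ := exists_dvd_add_mul hn
  refine ⟨y % (c / gcd b c), mod_lt _ (div_pos (le_of_dvd hc (gcd_dvd_right b c))
    (gcd_pos_of_pos_right b hc)), ?_⟩
  have hmod : b * (y % (c / gcd b c)) ≡ b * y [MOD c] :=
    ((mod_modEq y _).mul_left' b).of_dvd (dvd_mul_div_gcd_s5 b c)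
  exact modEq_zero_iff_dvd.1 ((hmod.add_left n).trans (modEq_zero_iff_dvd.2 hy))

theorem eq_of_dvd_add_mul_of_lt (hc : 0 < c) (hy : y < c / gcd b c) (hy' : y' < c / gcd b c)
    (h : c ∣ n + b * y) (h' : c ∣ n + b * y') : y = y' := by
  have hmod : n + b * y ≡ n + b * y' [MOD c] :=
    (modEq_zero_iff_dvd.2 h).trans (modEq_zero_iff_dvd.2 h').symm
  have hcancel := (ModEq.add_left_cancel' n hmod).cancel_left_div_gcd hc
  rw [gcd_comm] at hcancel
  exact hcancel.eq_of_lt_of_lt hy hy'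

end Nat

/-- `m - q ∉ M` is phrased as `¬ ∃ x ∈ M, m = q + x`, so no subtraction is needed. -/
def aperySet {G : Type*} [Add G] (M Q : Set G) : Set G :=
  {m | m ∈ M ∧ ∀ q ∈ Q, ¬ ∃ x ∈ M, m = q + x}

def congruenceSet (a b c : ℕ) : Set (ℕ × ℕ) :=
  {p | c ∣ a * p.1 + b * p.2}

namespace congruenceSet

variable {a b c : ℕ}

theorem exists_mem_eq_add_iff_le {m q : ℕ × ℕ} (hm : m ∈ congruenceSet a b c)
    (hq : q ∈ congruenceSet a b c) : (∃ x ∈ congruenceSet a b c, m = q + x) ↔ q ≤ m := by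
  rw [le_iff_exists_add]
  refine exists_congr fun x => and_iff_right_of_imp fun hx => ?_
  subst hx
  have hsplit : a * (q + x).1 + b * (q + x).2 = (a * q.1 + b * q.2) + (a * x.1 + b * x.2) := by
    simp only [Prod.fst_add, Prod.snd_add]
    ring
  exact (Nat.dvd_add_right hq).mp (hsplit ▸ hm)

theorem aperySet_eq {A B : ℕ} (hA : c ∣ a * A) (hB : c ∣ b * B) :
    aperySet (congruenceSet a b c) {(A, 0), (0, B)} =
      {p | p ∈ congruenceSet a b c ∧ p.1 < A ∧ p.2 < B} := by
  ext m
  simp only [aperySet, Set.mem_ofPred_eq, Set.forall_mem_insert, Set.mem_singleton_iff, forall_eq]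
  refine and_congr_right fun hm => ?_
  rw [exists_mem_eq_add_iff_le hm (by simpa [congruenceSet] using hA),
    exists_mem_eq_add_iff_le hm (by simpa [congruenceSet] using hB)]
  simp only [Prod.le_def, zero_le, and_true, true_and, not_le]

theorem gcd_dvd_fst (hcop : a.Coprime (b.gcd c)) {p : ℕ × ℕ} (hp : p ∈ congruenceSet a b c) :
    b.gcd c ∣ p.1 :=
  hcop.symm.dvd_mul_left.mp (Nat.gcd_dvd_of_dvd_add_mul hp)

theorem ncard_fst_lt_snd_lt (hc : 0 < c) (hcop : a.Coprime (b.gcd c)) {A : ℕ}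
    (hA : b.gcd c ∣ A) :
    {p | p ∈ congruenceSet a b c ∧ p.1 < A ∧ p.2 < c / b.gcd c}.ncard = A / b.gcd c := by
  rw [← Set.ncard_Iio_nat (A / b.gcd c)]
  refine Set.ncard_congr (fun p _ => p.1 / b.gcd c) ?_ ?_ ?_
  · rintro p ⟨-, hpA, -⟩
    exact Nat.div_lt_div_of_lt_of_dvd hA hpA
  · rintro p q ⟨hp, -, hpB⟩ ⟨hq, -, hqB⟩ hpq
    have hfst : p.1 = q.1 := (Nat.div_left_inj (gcd_dvd_fst hcop hp) (gcd_dvd_fst hcop hq)).mp hpq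
    refine Prod.ext hfst (Nat.eq_of_dvd_add_mul_of_lt hc hpB hqB hp ?_)
    simpa only [congruenceSet, Set.mem_ofPred_eq, hfst] using hq
  · intro k hk
    obtain ⟨y, hyB, hy⟩ := Nat.exists_lt_div_gcd_dvd_add_mul (b := b) hc
      (dvd_mul_of_dvd_right (dvd_mul_right (b.gcd c) k) a)
    refine ⟨(b.gcd c * k, y), ⟨hy, (Nat.lt_div_iff_mul_lt' hA k).mp hk, hyB⟩, ?_⟩
    exact Nat.mul_div_cancel_left k (Nat.gcd_pos_of_pos_right b hc)

end congruenceSet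

theorem stmt_5_general (a b c : ℕ) (hc : 0 < c)
    (hgcd : Nat.gcd a (Nat.gcd b c) = 1)
    (M : Set (ℕ × ℕ)) (hM : M = {p | c ∣ a * p.1 + b * p.2})
    (q₁ q₂ : ℕ × ℕ) (hq₁ : q₁ = (c / Nat.gcd a c, 0)) (hq₂ : q₂ = (0, c / Nat.gcd b c)) :
    Set.ncard {m | m ∈ M ∧ ∀ q ∈ ({q₁, q₂} : Set (ℕ × ℕ)), ¬ ∃ x ∈ M, m = q + x}
      = c / (Nat.gcd a c * Nat.gcd b c) := by
  subst hM hq₁ hq₂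
  have hcop : a.Coprime (b.gcd c) := hgcd
  have hgcds : a.gcd c * b.gcd c ∣ c :=
    (hcop.coprime_dvd_left (Nat.gcd_dvd_left a c)).mul_dvd_of_dvd_of_dvd
      (Nat.gcd_dvd_right a c) (Nat.gcd_dvd_right b c)
  change (aperySet (congruenceSet a b c) _).ncard = _
  rw [congruenceSet.aperySet_eq (Nat.dvd_mul_div_gcd_s5 a c) (Nat.dvd_mul_div_gcd_s5 b c),
    congruenceSet.ncard_fst_lt_snd_lt hc hcop (Nat.dvd_div_of_mul_dvd hgcds),
    Nat.div_div_eq_div_mul]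

/-- The Apéry set of `M = {(x,y) ∈ ℕ² : c ∣ ax + by}` with respect to
`Q = {(c/gcd(a,c), 0), (0, c/gcd(b,c))}` has exactly `c/(gcd(a,c)·gcd(b,c))` elements. -/
theorem stmt_5 (a b c : ℕ) (hc : 0 < c) (ha : 1 ≤ a) (ha' : a < c) (hb : 1 ≤ b) (hb' : b < c)
    (hgcd : Nat.gcd a (Nat.gcd b c) = 1)
    (M : Set (ℕ × ℕ)) (hM : M = {p | c ∣ a * p.1 + b * p.2})
    (q₁ q₂ : ℕ × ℕ) (hq₁ : q₁ = (c / Nat.gcd a c, 0)) (hq₂ : q₂ = (0, c / Nat.gcd b c)) :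
    Set.ncard {m | m ∈ M ∧ ∀ q ∈ ({q₁, q₂} : Set (ℕ × ℕ)), ¬ ∃ x ∈ M, m = q + x}
      = c / (Nat.gcd a c * Nat.gcd b c) :=
  stmt_5_general a b c hc hgcd M hM q₁ q₂ hq₁ hq₂
end

section
/- Every element x of M can be written uniquely as x = w + λ₁q₁ + λ₂q₂ with w ∈ Ap(M,Q) and λ₁, λ₂ ∈ ℕ, where q₁ = (c/gcd(a,c), 0), q₂ = (0, c/gcd(b,c)). -/
/-- Every `x ∈ M = {(x,y) ∈ ℕ² : c ∣ ax + by}` (with `gcd(a,b,c) = 1`) can be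
written uniquely as `x = w + λ₁q₁ + λ₂q₂` with `w` in the Apéry set of `M` with respect to
`Q = {q₁, q₂}` and `λ₁, λ₂ ∈ ℕ`. -/
theorem stmt_6 (a b c : ℕ) (ha : 0 < a) (hb : 0 < b) (hc : 0 < c)
    (hgcd : Nat.gcd a (Nat.gcd b c) = 1)
    (M : Set (ℕ × ℕ)) (hM : M = {p | c ∣ a * p.1 + b * p.2})
    (q₁ q₂ : ℕ × ℕ) (hq₁ : q₁ = (c / Nat.gcd a c, 0)) (hq₂ : q₂ = (0, c / Nat.gcd b c))
    (Ap : Set (ℕ × ℕ))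
    (hAp : Ap = {m | m ∈ M ∧ ∀ q ∈ ({q₁, q₂} : Set (ℕ × ℕ)), ¬ ∃ y ∈ M, m = q + y})
    (x : ℕ × ℕ) (hx : x ∈ M) :
    ∃! p : (ℕ × ℕ) × ℕ × ℕ, p.1 ∈ Ap ∧ x = p.1 + p.2.1 • q₁ + p.2.2 • q₂ := by
  subst hM hq₁ hq₂ hAp
  set d1 := c / Nat.gcd a c with hd1
  set d2 := c / Nat.gcd b c with hd2
  have hd1pos : 0 < d1 := Nat.div_pos (Nat.le_of_dvd hc (Nat.gcd_dvd_right a c))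
    (Nat.gcd_pos_of_pos_right a hc)
  have hd2pos : 0 < d2 := Nat.div_pos (Nat.le_of_dvd hc (Nat.gcd_dvd_right b c))
    (Nat.gcd_pos_of_pos_right b hc)
  have hdvd1 : c ∣ a * d1 := by
    refine ⟨a / Nat.gcd a c, ?_⟩
    rw [hd1, ← Nat.mul_div_assoc a (Nat.gcd_dvd_right a c),
      ← Nat.mul_div_assoc c (Nat.gcd_dvd_left a c), mul_comm]
  have hdvd2 : c ∣ b * d2 := by
    refine ⟨b / Nat.gcd b c, ?_⟩
    rw [hd2, ← Nat.mul_div_assoc b (Nat.gcd_dvd_right b c),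
      ← Nat.mul_div_assoc c (Nat.gcd_dvd_left b c), mul_comm]
  -- w ∈ M and w.1 < d1 and w.2 < d2 implies w ∈ Ap
  have hap : ∀ w : ℕ × ℕ, w ∈ {p : ℕ × ℕ | c ∣ a * p.1 + b * p.2} → w.1 < d1 → w.2 < d2 →
      w ∈ {m : ℕ × ℕ | m ∈ {p : ℕ × ℕ | c ∣ a * p.1 + b * p.2} ∧
        ∀ q ∈ ({((d1 : ℕ), (0 : ℕ)), ((0 : ℕ), (d2 : ℕ))} : Set (ℕ × ℕ)),
          ¬ ∃ y ∈ {p : ℕ × ℕ | c ∣ a * p.1 + b * p.2}, w = q + y} := by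
    intro w hw h1 h2
    refine ⟨hw, ?_⟩
    rintro q (rfl | rfl) ⟨y, _, hy⟩
    · have : w.1 = d1 + y.1 := by rw [hy]; simp
      omega
    · have : w.2 = d2 + y.2 := by rw [hy]; simp
      omega
  -- conversely, membership in Ap forces small coordinates
  have hsmall : ∀ w : ℕ × ℕ,
      w ∈ {m : ℕ × ℕ | m ∈ {p : ℕ × ℕ | c ∣ a * p.1 + b * p.2} ∧
        ∀ q ∈ ({((d1 : ℕ), (0 : ℕ)), ((0 : ℕ), (d2 : ℕ))} : Set (ℕ × ℕ)),
          ¬ ∃ y ∈ {p : ℕ × ℕ | c ∣ a * p.1 + b * p.2}, w = q + y} →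
      w.1 < d1 ∧ w.2 < d2 := by
    intro w ⟨hwM, hq⟩
    constructor
    · by_contra h
      push_neg at h
      refine hq (d1, 0) (Or.inl rfl) ⟨(w.1 - d1, w.2), ?_, ?_⟩
      · have h1 := Nat.mul_le_mul_left a h
        have h2 : a * (w.1 - d1) = a * w.1 - a * d1 := by rw [Nat.mul_sub]
        have : a * (w.1 - d1) + b * w.2 = (a * w.1 + b * w.2) - a * d1 := by omega
        simp only [Set.mem_setOf_eq, this]
        exact Nat.dvd_sub hwM hdvd1
      · ext <;> simp <;> omega
    · by_contra h
      push_neg at h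
      refine hq (0, d2) (Or.inr rfl) ⟨(w.1, w.2 - d2), ?_, ?_⟩
      · have h1 := Nat.mul_le_mul_left b h
        have h2 : b * (w.2 - d2) = b * w.2 - b * d2 := by rw [Nat.mul_sub]
        have : a * w.1 + b * (w.2 - d2) = (a * w.1 + b * w.2) - b * d2 := by omega
        simp only [Set.mem_setOf_eq, this]
        exact Nat.dvd_sub hwM hdvd2
      · ext <;> simp <;> omega
  refine ⟨((x.1 % d1, x.2 % d2), (x.1 / d1, x.2 / d2)), ⟨?_, ?_⟩, ?_⟩
  · refine hap _ ?_ (Nat.mod_lt _ hd1pos) (Nat.mod_lt _ hd2pos)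
    have key : a * x.1 + b * x.2 =
        (a * (x.1 % d1) + b * (x.2 % d2)) + (a * d1 * (x.1 / d1) + b * d2 * (x.2 / d2)) := by
      conv_lhs => rw [← Nat.mod_add_div x.1 d1, ← Nat.mod_add_div x.2 d2]
      ring
    have h2 : c ∣ a * d1 * (x.1 / d1) + b * d2 * (x.2 / d2) :=
      dvd_add (hdvd1.mul_right _) (hdvd2.mul_right _)
    have hx' : c ∣ (a * (x.1 % d1) + b * (x.2 % d2)) +
        (a * d1 * (x.1 / d1) + b * d2 * (x.2 / d2)) := key ▸ hx
    have := Nat.dvd_sub hx' h2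
    simpa using this
  · ext
    · simp [Nat.mod_add_div', mul_comm]
      exact (Nat.mod_add_div x.1 d1).symm
    · simp [Nat.mod_add_div', mul_comm]
      exact (Nat.mod_add_div x.2 d2).symm
  · rintro ⟨w, μ1, μ2⟩ ⟨hwAp, hxeq⟩
    obtain ⟨hw1, hw2⟩ := hsmall w hwAp
    have e1 : x.1 = w.1 + μ1 * d1 := by
      have := congrArg Prod.fst hxeq
      simpa using this
    have e2 : x.2 = w.2 + μ2 * d2 := by
      have := congrArg Prod.snd hxeq
      simpa using this
    have m1 : x.1 % d1 = w.1 := by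
      rw [e1, Nat.add_mul_mod_self_right, Nat.mod_eq_of_lt hw1]
    have m2 : x.2 % d2 = w.2 := by
      rw [e2, Nat.add_mul_mod_self_right, Nat.mod_eq_of_lt hw2]
    have v1 : x.1 / d1 = μ1 := by
      rw [e1, Nat.add_mul_div_right _ _ hd1pos, Nat.div_eq_of_lt hw1, zero_add]
    have v2 : x.2 / d2 = μ2 := by
      rw [e2, Nat.add_mul_div_right _ _ hd2pos, Nat.div_eq_of_lt hw2, zero_add]
    simp [Prod.ext_iff, m1, m2, v1, v2]
end

section
/- The quotient group G(M)/G(F) is cyclic of order c/(gcd(a,c)·gcd(b,c)), where G(M) is the subgroup of ℤ² generated by M and G(F) is the subgroup generated by (c/gcd(a,c), 0) and (0, c/gcd(b,c)). -/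
/-!
Every point of `G(M) = {(x, y) : c ∣ a x + b y}` has the form `(gcd(b,c) s, gcd(a,c) t)`, and
writing `a = gcd(a,c) a'`, `b = gcd(b,c) b'`, `n = c / (gcd(a,c) gcd(b,c))`, the defining
congruence becomes `a' s + b' t ≡ 0 (mod n)` with `a'` invertible mod `n`. Hence `t mod n`
determines `s mod n`, and `(x, y) ↦ t mod n` maps `G(M)` onto `ℤ/n` with kernel exactly `G(F)`,
the points with `n ∣ s` and `n ∣ t`.
-/

open AddSubgroup

def congruenceLattice (a b c : ℤ) : AddSubgroup (ℤ × ℤ) where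
  carrier := {p | c ∣ a * p.1 + b * p.2}
  add_mem' {p q} hp hq := by
    simpa only [Set.mem_ofPred_eq, Prod.fst_add, Prod.snd_add, mul_add, add_add_add_comm]
      using dvd_add hp hq
  zero_mem' := by simp
  neg_mem' {p} hp := by
    simpa only [Set.mem_ofPred_eq, Prod.fst_neg, Prod.snd_neg, mul_neg, ← neg_add, dvd_neg]
      using hp

@[simp]
lemma mem_congruenceLattice {a b c : ℤ} {p : ℤ × ℤ} :
    p ∈ congruenceLattice a b c ↔ c ∣ a * p.1 + b * p.2 :=
  Iff.rfl

lemma closure_nonneg_eq_congruenceLattice (a b : ℤ) {c : ℤ} (hc : 0 < c) :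
    AddSubgroup.closure {p : ℤ × ℤ | 0 ≤ p.1 ∧ 0 ≤ p.2 ∧ c ∣ a * p.1 + b * p.2} =
      congruenceLattice a b c := by
  set S := {p : ℤ × ℤ | 0 ≤ p.1 ∧ 0 ≤ p.2 ∧ c ∣ a * p.1 + b * p.2}
  refine le_antisymm ((closure_le _).2 fun p hp => hp.2.2) fun p hp => ?_
  -- Translate `p` into the first quadrant by a multiple of `(c, c)`.
  set k := |p.1| + |p.2|
  have hkc : k ≤ k * c := le_mul_of_one_le_right (by positivity) hc
  have hcc : ((c, c) : ℤ × ℤ) ∈ AddSubgroup.closure S :=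
    subset_closure ⟨hc.le, hc.le, ⟨a + b, by ring⟩⟩
  have hshift : p + k • ((c, c) : ℤ × ℤ) ∈ AddSubgroup.closure S := by
    refine subset_closure ⟨?_, ?_, ?_⟩ <;> simp only [Prod.fst_add, Prod.snd_add, Prod.smul_mk,
      smul_eq_mul]
    · linarith [neg_abs_le p.1, abs_nonneg p.2]
    · linarith [neg_abs_le p.2, abs_nonneg p.1]
    · obtain ⟨m, hm⟩ := hp
      exact ⟨m + k * (a + b), by linear_combination hm⟩
  simpa using sub_mem hshift (zsmul_mem hcc k)

lemma closure_pair_axes (m k : ℤ) :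
    AddSubgroup.closure {((m, 0) : ℤ × ℤ), (0, k)} = (zmultiples m).prod (zmultiples k) := by
  refine le_antisymm ((closure_le _).2 ?_) ?_
  · rintro p (rfl | rfl) <;> simp [mem_prod]
  · rintro ⟨x, y⟩ ⟨⟨i, rfl : i • m = x⟩, ⟨j, rfl : j • k = y⟩⟩
    have hsplit : ((i • m, j • k) : ℤ × ℤ) = i • (m, 0) + j • (0, k) := by simp
    rw [hsplit]
    exact add_mem (zsmul_mem (subset_closure (by simp)) i) (zsmul_mem (subset_closure (by simp)) j)

section Quotient

variable {a b c d d₁ d₂ a' b' : ℤ} {n : ℕ}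

lemma dvd_fst_of_mem_congruenceLattice (hda : IsCoprime d a) (hdb : d ∣ b) (hdc : d ∣ c)
    {p : ℤ × ℤ} (hp : p ∈ congruenceLattice a b c) : d ∣ p.1 :=
  hda.dvd_of_dvd_mul_left <| (dvd_add_left (hdb.mul_right _)).1 (hdc.trans hp)

lemma dvd_snd_of_mem_congruenceLattice (hdb : IsCoprime d b) (hda : d ∣ a) (hdc : d ∣ c)
    {p : ℤ × ℤ} (hp : p ∈ congruenceLattice a b c) : d ∣ p.2 :=
  hdb.dvd_of_dvd_mul_left <| (dvd_add_right (hda.mul_right _)).1 (hdc.trans hp)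

lemma mk_mul_mem_congruenceLattice_iff (ha : a = d₁ * a') (hb : b = d₂ * b')
    (hc : c = d₁ * d₂ * n) (hd : d₁ * d₂ ≠ 0) {s t : ℤ} :
    (d₂ * s, d₁ * t) ∈ congruenceLattice a b c ↔ (n : ℤ) ∣ a' * s + b' * t := by
  rw [mem_congruenceLattice, ha, hb, hc,
    show d₁ * a' * (d₂ * s) + d₂ * b' * (d₁ * t) = d₁ * d₂ * (a' * s + b' * t) by ring]
  exact mul_dvd_mul_iff_left hd

def AddSubgroup.sndDiv (H : AddSubgroup (ℤ × ℤ)) (d : ℤ) (hd : ∀ p ∈ H, d ∣ p.2) : H →+ ℤ :=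
  AddMonoidHom.mk' (fun p => p.1.2 / d) fun p _ => Int.add_ediv_of_dvd_left (hd p p.2)

theorem nonempty_quotient_congruenceLattice_addEquiv (ha : a = d₁ * a') (hb : b = d₂ * b')
    (hc : c = d₁ * d₂ * n) (hd₁ : d₁ ≠ 0) (hd₂ : d₂ ≠ 0) (had₂ : IsCoprime d₂ a)
    (hbd₁ : IsCoprime d₁ b) (ha' : IsCoprime a' n) :
    Nonempty (congruenceLattice a b c ⧸ ((zmultiples (d₂ * n)).prod
      (zmultiples (d₁ * n))).addSubgroupOf (congruenceLattice a b c) ≃+ ZMod n) := by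
  have hd : d₁ * d₂ ≠ 0 := mul_ne_zero hd₁ hd₂
  have hd₁c : d₁ ∣ c := hc ▸ (dvd_mul_right _ _).mul_right _
  have hd₂c : d₂ ∣ c := hc ▸ (dvd_mul_left _ _).mul_right _
  have hsplit : ∀ p ∈ congruenceLattice a b c, ∃ s t, p = (d₂ * s, d₁ * t) := fun p hp => by
    obtain ⟨s, hs⟩ := dvd_fst_of_mem_congruenceLattice had₂ (hb ▸ dvd_mul_right _ _) hd₂c hp
    obtain ⟨t, ht⟩ := dvd_snd_of_mem_congruenceLattice hbd₁ (ha ▸ dvd_mul_right _ _) hd₁c hp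
    exact ⟨s, t, Prod.ext hs ht⟩
  let φ := (Int.castAddHom (ZMod n)).comp <| (congruenceLattice a b c).sndDiv d₁
    fun _ => dvd_snd_of_mem_congruenceLattice hbd₁ (ha ▸ dvd_mul_right _ _) hd₁c
  have hφ (s t : ℤ) (h : (d₂ * s, d₁ * t) ∈ congruenceLattice a b c) : φ ⟨_, h⟩ = t := by
    simp [φ, AddSubgroup.sndDiv, hd₁]
  have hker : φ.ker = ((zmultiples (d₂ * n)).prod (zmultiples (d₁ * n))).addSubgroupOf _ := by
    ext ⟨p, hp⟩
    obtain ⟨s, t, rfl⟩ := hsplit p hp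
    have hst := (mk_mul_mem_congruenceLattice_iff ha hb hc hd).1 hp
    rw [AddMonoidHom.mem_ker, mem_addSubgroupOf, hφ, ZMod.intCast_zmod_eq_zero_iff_dvd, mem_prod,
      Int.mem_zmultiples_iff, Int.mem_zmultiples_iff, mul_dvd_mul_iff_left hd₁,
      mul_dvd_mul_iff_left hd₂]
    refine ⟨fun ht => ⟨?_, ht⟩, And.right⟩
    exact ha'.symm.dvd_of_dvd_mul_left ((dvd_add_left (ht.mul_left b')).1 hst)
  have hsurj : Function.Surjective φ := by
    intro z
    obtain ⟨t, rfl⟩ := ZMod.intCast_surjective z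
    obtain ⟨u, v, huv⟩ := ha'
    -- `u` inverts `a'` modulo `n`, so `s = -u b' t` solves `a' s + b' t ≡ 0`.
    have hmem : (d₂ * (-u * b' * t), d₁ * t) ∈ congruenceLattice a b c :=
      (mk_mul_mem_congruenceLattice_iff ha hb hc hd).2
        ⟨v * b' * t, by linear_combination (-(b' * t)) * huv⟩
    exact ⟨⟨_, hmem⟩, hφ _ _ hmem⟩
  exact ⟨(QuotientAddGroup.quotientAddEquivOfEq hker.symm).trans
    (QuotientAddGroup.quotientKerEquivOfSurjective φ hsurj)⟩

end Quotient

theorem stmt_8_general (a b c : ℕ) (hc : 0 < c)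
    (hgcd : Nat.gcd a (Nat.gcd b c) = 1)
    (M : Set (ℤ × ℤ))
    (hM : M = {p | 0 ≤ p.1 ∧ 0 ≤ p.2 ∧ (c : ℤ) ∣ a * p.1 + b * p.2})
    (GM GF : AddSubgroup (ℤ × ℤ))
    (hGM : GM = AddSubgroup.closure M)
    (hGF : GF = AddSubgroup.closure
      ({(((c / Nat.gcd a c : ℕ) : ℤ), 0), (0, ((c / Nat.gcd b c : ℕ) : ℤ))} : Set (ℤ × ℤ))) :
    Nonempty ((GM ⧸ GF.addSubgroupOf GM) ≃+
      ZMod (c / (Nat.gcd a c * Nat.gcd b c))) := by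
  subst hM hGM hGF
  set da := a.gcd c
  set db := b.gcd c
  set n := c / (da * db)
  have hda : 0 < da := Nat.gcd_pos_of_pos_right a hc
  have hdb : 0 < db := Nat.gcd_pos_of_pos_right b hc
  have hcn : da * db * n = c := Nat.mul_div_cancel' <|
    Nat.Coprime.mul_dvd_of_dvd_of_dvd (Nat.Coprime.coprime_dvd_left (Nat.gcd_dvd_left a c) hgcd)
      (Nat.gcd_dvd_right a c) (Nat.gcd_dvd_right b c)
  have hcda : c / da = db * n := by rw [← hcn, mul_assoc, Nat.mul_div_cancel_left _ hda]
  have hcdb : c / db = da * n := by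
    rw [← hcn, mul_comm da, mul_assoc, Nat.mul_div_cancel_left _ hdb]
  have hdab : Nat.Coprime da b := by
    rw [Nat.Coprime, Nat.gcd_assoc, Nat.gcd_comm c b, hgcd]
  have ha'n : Nat.Coprime (a / da) n :=
    (Nat.coprime_div_gcd_div_gcd hda).coprime_dvd_right (hcda ▸ dvd_mul_left n db)
  rw [closure_nonneg_eq_congruenceLattice _ _ (by exact_mod_cast hc), closure_pair_axes, hcda,
    hcdb, Nat.cast_mul, Nat.cast_mul]
  exact nonempty_quotient_congruenceLattice_addEquiv (a' := (a / da : ℕ)) (b' := (b / db : ℕ))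
    (by exact_mod_cast (Nat.mul_div_cancel' (Nat.gcd_dvd_left a c)).symm)
    (by exact_mod_cast (Nat.mul_div_cancel' (Nat.gcd_dvd_left b c)).symm)
    (by exact_mod_cast hcn.symm) (by positivity) (by positivity)
    (Nat.isCoprime_iff_coprime.2 (Nat.Coprime.symm hgcd)) (Nat.isCoprime_iff_coprime.2 hdab)
    (Nat.isCoprime_iff_coprime.2 ha'n)

/-- The quotient group `G(M)/G(F)` is cyclic of order
`c/(gcd(a,c)·gcd(b,c))`, where `G(M)` is the subgroup of `ℤ²` generated by
`M = {(x,y) ∈ ℕ² : c ∣ ax + by}` and `G(F)` is the subgroup generated by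
`(c/gcd(a,c), 0)` and `(0, c/gcd(b,c))`. -/
theorem stmt_8 (a b c : ℕ) (hc : 0 < c) (ha : 1 ≤ a) (ha' : a < c) (hb : 1 ≤ b) (hb' : b < c)
    (hgcd : Nat.gcd a (Nat.gcd b c) = 1)
    (M : Set (ℤ × ℤ))
    (hM : M = {p | 0 ≤ p.1 ∧ 0 ≤ p.2 ∧ (c : ℤ) ∣ a * p.1 + b * p.2})
    (GM GF : AddSubgroup (ℤ × ℤ))
    (hGM : GM = AddSubgroup.closure M)
    (hGF : GF = AddSubgroup.closure
      ({(((c / Nat.gcd a c : ℕ) : ℤ), 0), (0, ((c / Nat.gcd b c : ℕ) : ℤ))} : Set (ℤ × ℤ))) :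
    Nonempty ((GM ⧸ GF.addSubgroupOf GM) ≃+
      ZMod (c / (Nat.gcd a c * Nat.gcd b c))) :=
  stmt_8_general a b c hc hgcd M hM GM GF hGM hGF
end

section
/- Every element of M = {(x,y) ∈ ℕ² : 7 divides 4x+5y} can be written uniquely as λ₁(7,0) + λ₂(0,7) + m(1,2) + n(4,1) with λ₁, λ₂ ∈ ℕ and (m,n) ∈ ℕ² satisfying m + 4n < 7 and 2m + n < 7. -/
/-!
Modulo 7 the condition `7 ∣ 4x + 5y` says `y ≡ 2x`, so the class of `(x, y)` modulo `7ℕ²` is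
determined by `x mod 7`. The seven points `m(1,2) + n(4,1)` with `m + 4n < 7`, `2m + n < 7` are
`(0,0), (1,2), (2,4), (3,6)` (`n = 0`) and `(4,1), (5,3), (6,5)` (`n = 1`): one for each value of
`x mod 7`, all inside `[0,7)²`. Hence `(m, n)` is read off from `x mod 7`, and `λ₁, λ₂` are the
quotients of `x, y` by 7.
-/

def boxCoeffs (r : ℕ) : ℕ × ℕ := if r < 4 then (r, 0) else (r - 4, 1)

theorem boxCoeffs_spec {r : ℕ} (hr : r < 7) :
    ((boxCoeffs r).1 + 4 * (boxCoeffs r).2 < 7 ∧ 2 * (boxCoeffs r).1 + (boxCoeffs r).2 < 7) ∧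
      (boxCoeffs r).1 + 4 * (boxCoeffs r).2 = r ∧
      2 * (boxCoeffs r).1 + (boxCoeffs r).2 = 2 * r % 7 := by
  unfold boxCoeffs
  split_ifs <;> omega

theorem boxCoeffs_add_four_mul {m n : ℕ} (h₁ : m + 4 * n < 7) (h₂ : 2 * m + n < 7) :
    boxCoeffs (m + 4 * n) = (m, n) := by
  unfold boxCoeffs
  split_ifs <;> ext <;> dsimp only <;> omega

theorem mod_seven_eq_of_dvd {a b : ℕ} (h : 7 ∣ 4 * a + 5 * b) : b % 7 = 2 * (a % 7) % 7 := by
  omega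

theorem smul_seven_add_smul_add_smul_eq (l₁ l₂ m n : ℕ) :
    l₁ • ((7, 0) : ℕ × ℕ) + l₂ • ((0, 7) : ℕ × ℕ) + m • ((1, 2) : ℕ × ℕ) + n • ((4, 1) : ℕ × ℕ)
      = (7 * l₁ + (m + 4 * n), 7 * l₂ + (2 * m + n)) := by
  ext <;> simp only [Prod.fst_add, Prod.snd_add, Prod.smul_fst, Prod.smul_snd, smul_eq_mul] <;> ring

theorem eq_mul_add_iff_div_mod {a k q r : ℕ} (hr : r < k) :
    a = k * q + r ↔ a / k = q ∧ a % k = r := by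
  rw [Nat.div_mod_unique (by omega)]
  omega

/-- Every element of `M = {(x,y) ∈ ℕ² : 7 ∣ 4x + 5y}` can be written uniquely
as `λ₁(7,0) + λ₂(0,7) + m(1,2) + n(4,1)` with `λ₁, λ₂, m, n ∈ ℕ` and `m + 4n < 7`,
`2m + n < 7`. -/
theorem stmt_10 (M : Set (ℕ × ℕ)) (hM : M = {p | 7 ∣ 4 * p.1 + 5 * p.2})
    (x : ℕ × ℕ) (hx : x ∈ M) :
    ∃! p : ℕ × ℕ × ℕ × ℕ,
      (p.2.2.1 + 4 * p.2.2.2 < 7 ∧ 2 * p.2.2.1 + p.2.2.2 < 7) ∧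
      x = p.1 • ((7, 0) : ℕ × ℕ) + p.2.1 • ((0, 7) : ℕ × ℕ)
            + p.2.2.1 • ((1, 2) : ℕ × ℕ) + p.2.2.2 • ((4, 1) : ℕ × ℕ) := by
  subst hM
  obtain ⟨x₁, x₂⟩ := x
  have hx₂ : x₂ % 7 = 2 * (x₁ % 7) % 7 := mod_seven_eq_of_dvd hx
  obtain ⟨hbox, hfst, hsnd⟩ := boxCoeffs_spec (Nat.mod_lt x₁ (by norm_num : 0 < 7))
  refine ⟨(x₁ / 7, x₂ / 7, boxCoeffs (x₁ % 7)), ⟨hbox, ?_⟩, ?_⟩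
  · rw [smul_seven_add_smul_add_smul_eq, hfst, hsnd, ← hx₂, Nat.div_add_mod, Nat.div_add_mod]
  · rintro ⟨l₁, l₂, m, n⟩ ⟨⟨h₁, h₂⟩, hrepr⟩
    dsimp only at h₁ h₂ hrepr
    rw [smul_seven_add_smul_add_smul_eq, Prod.mk.injEq, eq_mul_add_iff_div_mod h₁,
      eq_mul_add_iff_div_mod h₂] at hrepr
    obtain ⟨⟨rfl, hr⟩, rfl, -⟩ := hrepr
    rw [hr, boxCoeffs_add_four_mul h₁ h₂]
end

section
/- For a positive integer a and M = {(x,y) ∈ ℕ² : (2a+1) divides ax + y}, the set of elements of M in the box [0, 2a+1)² equals {(2i, i) : 0 ≤ i ≤ a−1} ∪ {(2i+1, a+i+1) : 0 ≤ i ≤ a−1} ∪ {(2a, a)}. -/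
/-!
Since `2a ≡ -1 (mod 2a+1)` and `2` is invertible modulo `2a+1`, the congruence
`a x + y ≡ 0` is equivalent to `2y - x ≡ 0 (mod 2a+1)`. Inside the box,
`-(2a+1) < 2y - x < 2(2a+1)`, so the only possibilities are `2y = x` and `2y = x + 2a + 1`;
the first gives the points `(2i, i)` with `i ≤ a`, the second the points `(2i+1, a+i+1)` with `i < a`.
-/

theorem Int.dvd_mul_add_iff_dvd_two_mul_sub (a x y : ℤ) :
    2 * a + 1 ∣ a * x + y ↔ 2 * a + 1 ∣ 2 * y - x := by
  have hcop : IsCoprime (2 * a + 1) 2 := ⟨1, -a, by ring⟩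
  have key : (a * x + y) * 2 = (2 * y - x) + (2 * a + 1) * x := by ring
  calc 2 * a + 1 ∣ a * x + y
      ↔ 2 * a + 1 ∣ (a * x + y) * 2 := ⟨dvd_mul_of_dvd_left, hcop.dvd_of_dvd_mul_right⟩
    _ ↔ 2 * a + 1 ∣ 2 * y - x := by rw [key, dvd_add_left (dvd_mul_right _ _)]

theorem Int.eq_or_eq_add_of_dvd_two_mul_sub {n x y : ℤ} (hx : 0 ≤ x) (hxn : x < n)
    (hy : 0 ≤ y) (hyn : y < n) (h : n ∣ 2 * y - x) : 2 * y = x ∨ 2 * y = x + n := by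
  obtain ⟨k, hk⟩ := h
  have hk₀ : 0 ≤ k := by
    by_contra! hneg
    nlinarith
  have hk₁ : k ≤ 1 := by
    by_contra! hbig
    nlinarith
  interval_cases k <;> [left; right] <;> linarith

theorem Nat.dvd_mul_add_iff_of_lt {a x y : ℕ} (hx : x < 2 * a + 1) (hy : y < 2 * a + 1) :
    2 * a + 1 ∣ a * x + y ↔ 2 * y = x ∨ 2 * y = x + (2 * a + 1) := by
  rw [← Int.natCast_dvd_natCast]
  push_cast
  rw [Int.dvd_mul_add_iff_dvd_two_mul_sub]
  constructor
  · intro h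
    exact_mod_cast Int.eq_or_eq_add_of_dvd_two_mul_sub (by positivity) (by exact_mod_cast hx)
      (by positivity) (by exact_mod_cast hy) h
  · rintro (h | h)
    · exact ⟨0, by omega⟩
    · exact ⟨1, by omega⟩

/-- For a positive integer `a` and `M = {(x,y) ∈ ℕ² : (2a+1) ∣ ax + y}`, the
set of elements of `M` in the box `[0, 2a+1)²` is
`{(2i, i) : 0 ≤ i ≤ a−1} ∪ {(2i+1, a+i+1) : 0 ≤ i ≤ a−1} ∪ {(2a, a)}`. -/
theorem stmt_12 (a : ℕ) (ha : 0 < a)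
    (M : Set (ℕ × ℕ)) (hM : M = {p | (2 * a + 1) ∣ a * p.1 + p.2}) :
    {m | m ∈ M ∧ m.1 < 2 * a + 1 ∧ m.2 < 2 * a + 1}
      = ((fun i : ℕ => (2 * i, i)) '' {i | i ≤ a - 1})
        ∪ ((fun i : ℕ => (2 * i + 1, a + i + 1)) '' {i | i ≤ a - 1})
        ∪ {(2 * a, a)} := by
  subst hM
  ext ⟨x, y⟩
  simp only [Set.mem_ofPred_eq, Set.mem_union, Set.mem_image, Set.mem_singleton_iff,
    Prod.mk.injEq]
  constructor
  · rintro ⟨hdvd, hx, hy⟩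
    rcases (Nat.dvd_mul_add_iff_of_lt hx hy).mp hdvd with h | h
    · by_cases hya : y = a
      · exact Or.inr ⟨by omega, hya⟩
      · exact Or.inl (Or.inl ⟨y, by omega, by omega, rfl⟩)
    · exact Or.inl (Or.inr ⟨y - a - 1, by omega, by omega, by omega⟩)
  · rintro ((⟨i, hi, rfl, rfl⟩ | ⟨i, hi, rfl, rfl⟩) | ⟨rfl, rfl⟩) <;>
      refine ⟨(Nat.dvd_mul_add_iff_of_lt ?_ ?_).mpr ?_, ?_, ?_⟩ <;> omega
end

section
/- For a positive integer a, every solution (x,y) ∈ ℕ² of ax + y ≡ 0 (mod 2a+1) can be written uniquely as λ₁(2a+1,0) + λ₂(0,2a+1) + m(1,a+1) + n(2,1) with λ₁, λ₂ ∈ ℕ and (m,n) ∈ {0}×{0,…,a} ∪ {1}×{0,…,a−1}. -/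
/-!
Write `N = 2a + 1`. The first coordinate of `m(1,a+1) + n(2,1)` is `r = m + 2n`, and the admissible
pairs `(m, n)` are exactly the binary digits `(r % 2, r / 2)` of the residues `r < N`. Since
`a r + (m(a+1) + n) = (m + n) N`, the condition `N ∣ a x + y` forces `y ≡ m(a+1) + n (mod N)`, and
this residue is again `< N`. Hence `(m, n)` is read off from `x % N`, and `λ₁ = x / N`, `λ₂ = y / N`.
-/

lemma mul_digits_add_residue (a m n : ℕ) :
    a * (m + 2 * n) + (m * (a + 1) + n) = (m + n) * (2 * a + 1) := by
  ring

section

variable {a m n : ℕ}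

lemma residue_lt_of_digits (hm : m < 2) (h : m + 2 * n < 2 * a + 1) :
    m * (a + 1) + n < 2 * a + 1 := by
  interval_cases m <;> omega

lemma admissible_iff (ha : 0 < a) :
    ((m = 0 ∧ n ≤ a) ∨ (m = 1 ∧ n ≤ a - 1)) ↔ m < 2 ∧ m + 2 * n < 2 * a + 1 := by
  omega

lemma combination_eq_iff (x : ℕ × ℕ) (l₁ l₂ : ℕ) :
    x = l₁ • ((2 * a + 1, 0) : ℕ × ℕ) + l₂ • ((0, 2 * a + 1) : ℕ × ℕ)
        + m • ((1, a + 1) : ℕ × ℕ) + n • ((2, 1) : ℕ × ℕ) ↔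
      x.1 = (m + 2 * n) + (2 * a + 1) * l₁ ∧ x.2 = (m * (a + 1) + n) + (2 * a + 1) * l₂ := by
  simp only [Prod.ext_iff, Prod.fst_add, Prod.snd_add, Prod.smul_mk, smul_eq_mul]
  constructor <;> rintro ⟨h₁, h₂⟩ <;> constructor <;> linarith

lemma snd_mod_eq_of_dvd {x y : ℕ} (h : 2 * a + 1 ∣ a * x + y) (hm : m < 2)
    (hx : x % (2 * a + 1) = m + 2 * n) : y % (2 * a + 1) = m * (a + 1) + n := by
  have hc : m * (a + 1) + n < 2 * a + 1 :=
    residue_lt_of_digits hm (hx ▸ Nat.mod_lt x (by omega))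
  have hax : a * x + y ≡ a * (m + 2 * n) + y [MOD 2 * a + 1] :=
    (hx ▸ (Nat.mod_modEq x _).symm.mul_left a).add_right y
  have hy : a * (m + 2 * n) + y ≡ 0 [MOD 2 * a + 1] :=
    hax.symm.trans (Nat.modEq_zero_iff_dvd.2 h)
  have hc' : a * (m + 2 * n) + (m * (a + 1) + n) ≡ 0 [MOD 2 * a + 1] :=
    Nat.modEq_zero_iff_dvd.2 ⟨m + n, by rw [mul_digits_add_residue, mul_comm]⟩
  have := Nat.ModEq.add_left_cancel' _ (hy.trans hc'.symm)
  rwa [Nat.ModEq, Nat.mod_eq_of_lt hc] at this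

end

/-- For a positive integer `a`, every solution `(x,y) ∈ ℕ²` of
`ax + y ≡ 0 (mod 2a+1)` can be written uniquely as
`λ₁(2a+1,0) + λ₂(0,2a+1) + m(1,a+1) + n(2,1)` with `λ₁, λ₂ ∈ ℕ` and
`(m,n) ∈ {0}×{0,…,a} ∪ {1}×{0,…,a−1}`. -/
theorem stmt_13 (a : ℕ) (ha : 0 < a)
    (M : Set (ℕ × ℕ)) (hM : M = {p | (2 * a + 1) ∣ a * p.1 + p.2})
    (x : ℕ × ℕ) (hx : x ∈ M) :
    ∃! p : ℕ × ℕ × ℕ × ℕ,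
      ((p.2.2.1 = 0 ∧ p.2.2.2 ≤ a) ∨ (p.2.2.1 = 1 ∧ p.2.2.2 ≤ a - 1)) ∧
      x = p.1 • ((2 * a + 1, 0) : ℕ × ℕ) + p.2.1 • ((0, 2 * a + 1) : ℕ × ℕ)
            + p.2.2.1 • ((1, a + 1) : ℕ × ℕ) + p.2.2.2 • ((2, 1) : ℕ × ℕ) := by
  subst hM
  have hN : 0 < 2 * a + 1 := by omega
  have hr : x.1 % (2 * a + 1) % 2 < 2 := Nat.mod_lt _ two_pos
  have hy := snd_mod_eq_of_dvd hx hr (Nat.mod_add_div _ 2).symm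
  refine ⟨(x.1 / (2 * a + 1), x.2 / (2 * a + 1), x.1 % (2 * a + 1) % 2, x.1 % (2 * a + 1) / 2),
    ⟨?_, ?_⟩, ?_⟩
  · exact (admissible_iff ha).2 ⟨hr, by rw [Nat.mod_add_div]; exact Nat.mod_lt _ hN⟩
  · rw [combination_eq_iff, Nat.mod_add_div _ 2, ← hy]
    exact ⟨(Nat.mod_add_div _ _).symm, (Nat.mod_add_div _ _).symm⟩
  · rintro ⟨l₁, l₂, m, n⟩ ⟨hmn, hcomb⟩
    dsimp only at hmn hcomb
    obtain ⟨hm, hmn⟩ := (admissible_iff ha).1 hmn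
    rw [combination_eq_iff] at hcomb
    obtain ⟨hl₁, hx₁⟩ := (Nat.div_mod_unique hN).2 ⟨hcomb.1.symm, hmn⟩
    obtain ⟨hl₂, -⟩ := (Nat.div_mod_unique hN).2 ⟨hcomb.2.symm, residue_lt_of_digits hm hmn⟩
    simp only [hl₁, hl₂, hx₁, Prod.mk.injEq, true_and]
    omega
end

section
/- For a positive integer a, the set {(0, 2a+1), (1, a+1), (2, 1), (2a+1, 0)} generates the monoid M = {(x,y) ∈ ℕ² : (2a+1) divides ax + y}, and each of its elements is irreducible in M (not a sum of two nonzero elements of M). -/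
lemma stmt14_cop (a : ℕ) : Nat.Coprime (2*a+1) a := by
  simpa [two_mul, mul_comm, add_comm] using (Nat.coprime_one_left a).add_mul_left_left 2

lemma stmt14_aux (a : ℕ) (ha : 0 < a) :
    ∀ n x y, x + y ≤ n → (2*a+1) ∣ a*x+y →
    (x,y) ∈ AddSubmonoid.closure
      ({(0, 2*a+1), (1, a+1), (2, 1), (2*a+1, 0)} : Set (ℕ×ℕ)) := by
  intro n
  induction n with
  | zero =>
    intro x y hxy _
    have hx : x = 0 := by omega
    have hy : y = 0 := by omega
    subst hx; subst hy
    exact zero_mem _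
  | succ n ih =>
    intro x y hxy hd
    set S : Set (ℕ×ℕ) := {(0, 2*a+1), (1, a+1), (2, 1), (2*a+1, 0)} with hS
    by_cases h00 : x = 0 ∧ y = 0
    · obtain ⟨hx, hy⟩ := h00; subst hx; subst hy; exact zero_mem _
    rcases le_or_gt (2*a+1) x with hx | hx
    · -- subtract (2a+1, 0)
      have hd' : (2*a+1) ∣ a*(x-(2*a+1)) + y := by
        have h1 : (2*a+1) ∣ a*(2*a+1) := ⟨a, by ring⟩
        have := Nat.dvd_sub hd h1
        have heq : a*x+y - a*(2*a+1) = a*(x-(2*a+1)) + y := by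
          have : a*x = a*(x-(2*a+1)) + a*(2*a+1) := by
            rw [← Nat.mul_add]; congr 1; omega
          omega
        rwa [heq] at this
      have hr := ih (x-(2*a+1)) y (by omega) hd'
      have he : (x, y) = ((2*a+1, 0) : ℕ×ℕ) + (x-(2*a+1), y) := by
        simp [Prod.ext_iff]; omega
      rw [he]
      exact add_mem (AddSubmonoid.subset_closure (by simp [hS])) hr
    rcases Nat.eq_zero_or_pos x with hx0 | hxpos
    · -- x = 0, y > 0, so y ≥ 2a+1
      subst hx0
      have hdy : (2*a+1) ∣ y := by simpa using hd
      have hy : 2*a+1 ≤ y := Nat.le_of_dvd (by omega) hdy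
      have hd' : (2*a+1) ∣ a*0 + (y-(2*a+1)) := by
        simpa using Nat.dvd_sub hdy dvd_rfl
      have hr := ih 0 (y-(2*a+1)) (by omega) hd'
      have he : ((0:ℕ), y) = ((0, 2*a+1) : ℕ×ℕ) + (0, y-(2*a+1)) := by
        simp [Prod.ext_iff]; omega
      rw [he]
      exact add_mem (AddSubmonoid.subset_closure (by simp [hS])) hr
    rcases Nat.lt_or_ge x 2 with hx2 | hx2
    · -- x = 1
      have hx1 : x = 1 := by omega
      subst hx1
      have hy : a+1 ≤ y := by
        have := Nat.le_of_dvd (by omega) hd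
        omega
      have hd' : (2*a+1) ∣ a*0 + (y-(a+1)) := by
        have : a*1 + y - (2*a+1) = a*0 + (y-(a+1)) := by omega
        rw [← this]
        exact Nat.dvd_sub hd dvd_rfl
      have hr := ih 0 (y-(a+1)) (by omega) hd'
      have he : ((1:ℕ), y) = ((1, a+1) : ℕ×ℕ) + (0, y-(a+1)) := by
        simp [Prod.ext_iff]; omega
      rw [he]
      exact add_mem (AddSubmonoid.subset_closure (by simp [hS])) hr
    · -- 2 ≤ x < 2a+1, show y ≥ 1
      have hy : 1 ≤ y := by
        by_contra hy
        have hy0 : y = 0 := by omega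
        subst hy0
        have : (2*a+1) ∣ a * x := by simpa using hd
        have hx' : (2*a+1) ∣ x := (stmt14_cop a).dvd_of_dvd_mul_left this
        have := Nat.le_of_dvd (by omega) hx'
        omega
      have hd' : (2*a+1) ∣ a*(x-2) + (y-1) := by
        have heq : a*x + y - (2*a+1) = a*(x-2) + (y-1) := by
          have : a*x = a*(x-2) + a*2 := by rw [← Nat.mul_add]; congr 1; omega
          omega
        rw [← heq]
        exact Nat.dvd_sub hd dvd_rfl
      have hr := ih (x-2) (y-1) (by omega) hd'
      have he : (x, y) = ((2, 1) : ℕ×ℕ) + (x-2, y-1) := by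
        simp [Prod.ext_iff]; omega
      rw [he]
      exact add_mem (AddSubmonoid.subset_closure (by simp [hS])) hr

/-- For a positive integer `a`, the set
`{(0,2a+1), (1,a+1), (2,1), (2a+1,0)}` generates `M = {(x,y) ∈ ℕ² : (2a+1) ∣ ax + y}`, and
each of its elements is irreducible in `M`. -/
theorem stmt_14 (a : ℕ) (ha : 0 < a)
    (M : AddSubmonoid (ℕ × ℕ))
    (hM : ∀ p : ℕ × ℕ, p ∈ M ↔ (2 * a + 1) ∣ a * p.1 + p.2)
    (H : Set (ℕ × ℕ))
    (hH : H = {(0, 2 * a + 1), (1, a + 1), (2, 1), (2 * a + 1, 0)}) :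
    AddSubmonoid.closure H = M ∧
    ∀ h ∈ H, ∀ u v : ℕ × ℕ, u ∈ M → v ∈ M → u ≠ 0 → v ≠ 0 → h ≠ u + v := by
  subst hH
  constructor
  · apply le_antisymm
    · rw [AddSubmonoid.closure_le]
      rintro p hp
      simp only [Set.mem_insert_iff, Set.mem_singleton_iff] at hp
      rcases hp with h|h|h|h <;> subst h <;> rw [SetLike.mem_coe, hM]
      · exact ⟨1, by ring⟩
      · exact ⟨1, by ring⟩
      · exact ⟨1, by ring⟩
      · exact ⟨a, by ring⟩
    · rintro ⟨x, y⟩ hp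
      rw [hM] at hp
      exact stmt14_aux a ha (x+y) x y le_rfl hp
  · rintro h hh ⟨x1, y1⟩ ⟨x2, y2⟩ hu hv hu0 hv0 heq
    rw [hM] at hu hv
    have hu0' : x1 ≠ 0 ∨ y1 ≠ 0 := by
      by_contra hc; push_neg at hc; exact hu0 (by simp [hc.1, hc.2, Prod.ext_iff])
    have hv0' : x2 ≠ 0 ∨ y2 ≠ 0 := by
      by_contra hc; push_neg at hc; exact hv0 (by simp [hc.1, hc.2, Prod.ext_iff])
    have key0 : ∀ z : ℕ, (2*a+1) ∣ z → z ≠ 0 → 2*a+1 ≤ z :=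
      fun z hz hz0 => Nat.le_of_dvd (by omega) hz
    simp only [Set.mem_insert_iff, Set.mem_singleton_iff] at hh
    have heq' : h.1 = x1 + x2 ∧ h.2 = y1 + y2 := by
      rw [heq]; exact ⟨rfl, rfl⟩
    obtain ⟨he1, he2⟩ := heq'
    rcases hh with h4|h4|h4|h4 <;> subst h4 <;> simp only at he1 he2
    · -- (0, 2a+1)
      have hx1 : x1 = 0 := by omega
      have hx2 : x2 = 0 := by omega
      subst hx1; subst hx2
      have h1 := key0 y1 (by simpa using hu) (by tauto)
      have h2 := key0 y2 (by simpa using hv) (by tauto)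
      omega
    · -- (1, a+1)
      rcases Nat.eq_zero_or_pos x1 with h0 | h0
      · subst h0
        have h1 := key0 y1 (by simpa using hu) (by tauto)
        omega
      · have hx1 : x1 = 1 := by omega
        have hx2 : x2 = 0 := by omega
        subst hx2
        have h2 := key0 y2 (by simpa using hv) (by tauto)
        omega
    · -- (2, 1)
      rcases Nat.eq_zero_or_pos x1 with h0 | h0
      · subst h0
        have h1 := key0 y1 (by simpa using hu) (by tauto)
        omega
      rcases Nat.eq_zero_or_pos x2 with h0' | h0'
      · subst h0'
        have h2 := key0 y2 (by simpa using hv) (by tauto)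
        omega
      · have hx1 : x1 = 1 := by omega
        subst hx1
        have := Nat.le_of_dvd (by omega) hu
        omega
    · -- (2a+1, 0)
      have hy1 : y1 = 0 := by omega
      have hy2 : y2 = 0 := by omega
      subst hy1; subst hy2
      have hd1 : (2*a+1) ∣ a * x1 := by simpa using hu
      have hx1 : (2*a+1) ∣ x1 := (stmt14_cop a).dvd_of_dvd_mul_left hd1
      rcases Nat.eq_zero_or_pos x1 with h0 | h0
      · subst h0; tauto
      · have := Nat.le_of_dvd h0 hx1
        have hx2 : x2 = 0 := by omega
        subst hx2; tauto
end

section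
/- In a reduced root-closed commutative cancellative monoid M, if q ∈ M and x ∈ M satisfy mq ≤_M nx for some positive integers m ≥ n, then q ≤_M x (here a ≤_M b means b − a ∈ M in the quotient group). -/
theorem AddSubmonoid.nsmul_sub_mem_of_nsmul_eq_nsmul_add {G : Type*} [AddCommGroup G]
    {M : AddSubmonoid G} {q x t : G} {m n : ℕ} (hq : q ∈ M) (ht : t ∈ M) (hnm : n ≤ m)
    (h : n • x = m • q + t) : n • (x - q) ∈ M := by
  obtain ⟨k, rfl⟩ := Nat.exists_eq_add_of_le hnm
  have hsplit : n • (x - q) = k • q + t := by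
    rw [smul_sub, h, add_nsmul]
    abel
  rw [hsplit]
  exact M.add_mem (M.nsmul_mem hq k) ht

theorem stmt_15_general (G : Type*) [AddCommGroup G] (M : AddSubmonoid G)
    (hrc : ∀ z ∈ AddSubgroup.closure (M : Set G),
      (∃ n : ℕ, 0 < n ∧ n • z ∈ M) → z ∈ M)
    (q x : G) (hq : q ∈ M) (hx : x ∈ M)
    (m n : ℕ) (hn : 0 < n) (hmn : n ≤ m)
    (h : ∃ t ∈ M, n • x = m • q + t) :
    ∃ t ∈ M, x = q + t := by
  obtain ⟨t, ht, hxt⟩ := h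
  have hdiff : x - q ∈ AddSubgroup.closure (M : Set G) :=
    sub_mem (AddSubgroup.subset_closure hx) (AddSubgroup.subset_closure hq)
  have hnsmul : n • (x - q) ∈ M := M.nsmul_sub_mem_of_nsmul_eq_nsmul_add hq ht hmn hxt
  exact ⟨x - q, hrc _ hdiff ⟨n, hn, hnsmul⟩, (add_sub_cancel q x).symm⟩

/-- In a reduced root-closed commutative cancellative monoid `M` (realized as
an additive submonoid of its quotient group, here an ambient abelian group `G` with the
quotient group being `G(M) = closure M`), if `q, x ∈ M` and `m•q ≤_M n•x` for positive
integers `m ≥ n`, then `q ≤_M x`. -/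
theorem stmt_15 (G : Type*) [AddCommGroup G] (M : AddSubmonoid G)
    (hred : ∀ x ∈ M, -x ∈ M → x = 0)
    (hrc : ∀ z ∈ AddSubgroup.closure (M : Set G),
      (∃ n : ℕ, 0 < n ∧ n • z ∈ M) → z ∈ M)
    (q x : G) (hq : q ∈ M) (hx : x ∈ M)
    (m n : ℕ) (hn : 0 < n) (hmn : n ≤ m)
    (h : ∃ t ∈ M, n • x = m • q + t) :
    ∃ t ∈ M, x = q + t :=
  stmt_15_general G M hrc q x hq hx m n hn hmn h
end

section
/- Let G be a torsion abelian group, F the free commutative monoid on a set Q, and I : G × G → F a map satisfying: I(a,b) = I(b,a); I(a,0) = 0; I(a,b) + I(a+b,c) = I(b,c) + I(a,b+c); and for a ≠ 0, I(a,−a) is neither 0 nor an element of Q. Then G × F with operation (a,f) +_I (b,g) = (a+b, f+g+I(a,b)) is a commutative cancellative monoid whose only unit is (0,0), and every element (0,q) with q ∈ Q is irreducible. -/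
/-!
The twisted operation on `G × F` is commutative, associative and unital because `I` is a
symmetric, normalised 2-cocycle; it is cancellative because `G` and `F` are. If
`(a, f) +_I (b, g)` has first coordinate `0`, then `b = -a` and the second coordinate is
`f + g + I(a, -a)`. Since `F` has no nonzero units and `Q` consists of the atoms of `F`,
the conditions on `I(a, -a)` force `a = 0`, after which both claims reduce to `F` itself.
-/

namespace Finsupp

theorem add_eq_single_one_iff {Q : Type*} {q : Q} {a b : Q →₀ ℕ} :
    a + b = single q 1 ↔ a = 0 ∧ b = single q 1 ∨ a = single q 1 ∧ b = 0 := by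
  refine ⟨fun h => ?_, by rintro (⟨rfl, rfl⟩ | ⟨rfl, rfl⟩) <;> simp⟩
  have hdeg : degree a + degree b = 1 := by rw [← map_add, h, degree_single]
  rcases Nat.add_eq_one_iff.1 hdeg with ⟨ha, -⟩ | ⟨-, hb⟩
  · obtain rfl := (degree_eq_zero_iff a).1 ha
    exact .inl ⟨rfl, by simpa using h⟩
  · obtain rfl := (degree_eq_zero_iff b).1 hb
    exact .inr ⟨by simpa using h, rfl⟩

end Finsupp

section TwistedAdd

variable {G M : Type*} [AddCommMonoid G] [AddCommMonoid M] (I : G → G → M)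

def twistedAdd (p r : G × M) : G × M :=
  (p.1 + r.1, p.2 + r.2 + I p.1 r.1)

variable {I}

theorem twistedAdd_comm (hI : ∀ a b, I a b = I b a) (x y : G × M) :
    twistedAdd I x y = twistedAdd I y x := by
  rw [twistedAdd, twistedAdd, hI, add_comm x.1, add_comm x.2]

theorem twistedAdd_assoc (hI : ∀ a b c, I a b + I (a + b) c = I b c + I a (b + c))
    (x y z : G × M) :
    twistedAdd I (twistedAdd I x y) z = twistedAdd I x (twistedAdd I y z) := by
  refine Prod.ext (add_assoc _ _ _) ?_
  calc x.2 + y.2 + I x.1 y.1 + z.2 + I (x.1 + y.1) z.1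
      = x.2 + (y.2 + z.2) + (I x.1 y.1 + I (x.1 + y.1) z.1) := by abel
    _ = x.2 + (y.2 + z.2) + (I y.1 z.1 + I x.1 (y.1 + z.1)) := by rw [hI]
    _ = x.2 + (y.2 + z.2 + I y.1 z.1) + I x.1 (y.1 + z.1) := by abel

theorem twistedAdd_zero (hI : ∀ a, I a 0 = 0) (x : G × M) : twistedAdd I x (0, 0) = x := by
  simp [twistedAdd, hI]

theorem twistedAdd_left_cancel [IsLeftCancelAdd G] [IsCancelAdd M] {x y z : G × M}
    (h : twistedAdd I x y = twistedAdd I x z) : y = z := by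
  obtain ⟨h₁, h₂⟩ := Prod.mk.inj h
  have hyz : y.1 = z.1 := add_left_cancel h₁
  rw [hyz] at h₂
  exact Prod.ext hyz (add_left_cancel (add_right_cancel h₂))

end TwistedAdd

section Inverse

variable {G M : Type*} [AddCommGroup G] [AddCommMonoid M] {I : G → G → M}

theorem twistedAdd_eq_mk_zero_iff {x y : G × M} {f : M} :
    twistedAdd I x y = (0, f) ↔ y.1 = -x.1 ∧ x.2 + y.2 + I x.1 (-x.1) = f := by
  rw [twistedAdd, Prod.mk.injEq, add_eq_zero_iff_eq_neg']
  exact ⟨fun ⟨hy, hf⟩ => ⟨hy, hy ▸ hf⟩, fun ⟨hy, hf⟩ => ⟨hy, hy ▸ hf⟩⟩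

theorem twistedAdd_eq_zero [PartialOrder M] [CanonicallyOrderedAdd M]
    (hI : ∀ a, a ≠ 0 → I a (-a) ≠ 0) {x y : G × M} (h : twistedAdd I x y = (0, 0)) :
    x = (0, 0) ∧ y = (0, 0) := by
  obtain ⟨hy, hs⟩ := twistedAdd_eq_mk_zero_iff.1 h
  obtain ⟨⟨hx₂, hy₂⟩, hIx⟩ := add_eq_zero.1 hs |>.imp_left add_eq_zero.1
  have hx₁ : x.1 = 0 := by_contra fun hx => hI x.1 hx hIx
  exact ⟨Prod.ext hx₁ hx₂, Prod.ext (by rw [hy, hx₁, neg_zero]) hy₂⟩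

theorem twistedAdd_eq_single_one {Q : Type*} {I : G → G → Q →₀ ℕ} {q : Q}
    (hI₀ : ∀ a, I a 0 = 0)
    (hI : ∀ a, a ≠ 0 → I a (-a) ≠ 0 ∧ I a (-a) ≠ Finsupp.single q 1)
    {x y : G × (Q →₀ ℕ)} (h : twistedAdd I x y = (0, Finsupp.single q 1)) :
    x = (0, 0) ∨ y = (0, 0) := by
  obtain ⟨hy, hs⟩ := twistedAdd_eq_mk_zero_iff.1 h
  have hx₁ : x.1 = 0 := by
    by_contra hx
    rcases Finsupp.add_eq_single_one_iff.1 hs with ⟨-, hIx⟩ | ⟨-, hIx⟩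
    · exact (hI x.1 hx).2 hIx
    · exact (hI x.1 hx).1 hIx
  have hy₁ : y.1 = 0 := by rw [hy, hx₁, neg_zero]
  rw [hx₁, neg_zero, hI₀, add_zero] at hs
  rcases Finsupp.add_eq_single_one_iff.1 hs with ⟨hx₂, -⟩ | ⟨-, hy₂⟩
  · exact .inl (Prod.ext hx₁ hx₂)
  · exact .inr (Prod.ext hy₁ hy₂)

end Inverse

theorem stmt_19_general (G : Type*) [AddCommGroup G]
    (Q : Type*) (I : G → G → (Q →₀ ℕ))
    (h1 : ∀ a b : G, I a b = I b a)
    (h2 : ∀ a : G, I a 0 = 0)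
    (h3 : ∀ a b c : G, I a b + I (a + b) c = I b c + I a (b + c))
    (h4 : ∀ a : G, a ≠ 0 → I a (-a) ≠ 0 ∧ ∀ q : Q, I a (-a) ≠ Finsupp.single q 1)
    (op : (G × (Q →₀ ℕ)) → (G × (Q →₀ ℕ)) → (G × (Q →₀ ℕ)))
    (hop : ∀ p r, op p r = (p.1 + r.1, p.2 + r.2 + I p.1 r.1)) :
    (∀ x y, op x y = op y x) ∧
    (∀ x y z, op (op x y) z = op x (op y z)) ∧
    (∀ x, op x (0, 0) = x) ∧
    (∀ x y z, op x y = op x z → y = z) ∧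
    (∀ x y, op x y = ((0, 0) : G × (Q →₀ ℕ)) → x = (0, 0) ∧ y = (0, 0)) ∧
    (∀ q : Q, ((0 : G), Finsupp.single q 1) ≠ ((0, 0) : G × (Q →₀ ℕ)) ∧
      ∀ x y, op x y = ((0 : G), Finsupp.single q 1) → x = (0, 0) ∨ y = (0, 0)) := by
  obtain rfl : op = twistedAdd I := funext₂ hop
  refine ⟨twistedAdd_comm h1, twistedAdd_assoc h3, twistedAdd_zero h2,
    fun _ _ _ => twistedAdd_left_cancel,
    fun _ _ => twistedAdd_eq_zero fun a ha => (h4 a ha).1,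
    fun q => ⟨by simp, fun _ _ => ?_⟩⟩
  exact twistedAdd_eq_single_one h2 fun a ha => ⟨(h4 a ha).1, (h4 a ha).2 q⟩

/-- Let `G` be a torsion abelian group, `F = ℕ^(Q)` the free commutative
monoid on a set `Q`, and `I : G × G → F` satisfying symmetry, `I(a,0) = 0`, the cocycle
condition, and `I(a,−a) ∉ Q ∪ {0}` for `a ≠ 0`.  Then `G × F` with
`(a,f) +_I (b,g) = (a+b, f+g+I(a,b))` is a commutative cancellative monoid (with identity
`(0,0)`) whose only unit is `(0,0)`, and every `(0,q)` with `q ∈ Q` is irreducible. -/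
theorem stmt_19 (G : Type*) [AddCommGroup G]
    (htor : ∀ g : G, ∃ n : ℕ, 0 < n ∧ n • g = 0)
    (Q : Type*) (I : G → G → (Q →₀ ℕ))
    (h1 : ∀ a b : G, I a b = I b a)
    (h2 : ∀ a : G, I a 0 = 0)
    (h3 : ∀ a b c : G, I a b + I (a + b) c = I b c + I a (b + c))
    (h4 : ∀ a : G, a ≠ 0 → I a (-a) ≠ 0 ∧ ∀ q : Q, I a (-a) ≠ Finsupp.single q 1)
    (op : (G × (Q →₀ ℕ)) → (G × (Q →₀ ℕ)) → (G × (Q →₀ ℕ)))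
    (hop : ∀ p r, op p r = (p.1 + r.1, p.2 + r.2 + I p.1 r.1)) :
    (∀ x y, op x y = op y x) ∧
    (∀ x y z, op (op x y) z = op x (op y z)) ∧
    (∀ x, op x (0, 0) = x) ∧
    (∀ x y z, op x y = op x z → y = z) ∧
    (∀ x y, op x y = ((0, 0) : G × (Q →₀ ℕ)) → x = (0, 0) ∧ y = (0, 0)) ∧
    (∀ q : Q, ((0 : G), Finsupp.single q 1) ≠ ((0, 0) : G × (Q →₀ ℕ)) ∧
      ∀ x y, op x y = ((0 : G), Finsupp.single q 1) → x = (0, 0) ∨ y = (0, 0)) :=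
  stmt_19_general G Q I h1 h2 h3 h4 op hop
end
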